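/- arXiv:2507.12303 — 4 statements merged into one kernel-verified Lean document; each statement's English description precedes it below -/
import Mathlib

section
/- Let p>2 and suppose u0(x0)>0 for some vertex x0∈V and δ:=inf_{t≥0}σ(x0,t)>0. If for some fixed ε>0 one has f(s) ≥ (1/δ + ε)·s^{p−1} for all s ≥ 0, then the inequality problem u_t(x,t) − Δ_p u(x,t) ≥ σ(x,t)f(u(x,t)) on V×(0,∞), u(x,0)=u0(x), admits no nonnegative solution u defined for all t ≥ 0 with u(x,·) continuously differentiable on [0,∞) for every x∈V; every nonnegative solution blows up in finite time, i.e. there is a finite T with u(x0,t)→∞ as t→T⁻. -/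
open scoped ENNReal
open Classical Filter Set

/-- The weighted degree `μ(x) = ∑_{y ∼ x} ω(x,y)` of a vertex of a locally finite
weighted graph (non-neighbours contribute `ω(x,y) = 0`). -/
noncomputable def graphMu {V : Type*} (ω : V → V → ℝ) (x : V) : ℝ := ∑' y, ω x y

/-- The graph `p`-Laplacian
`Δ_p f(x) = (1/μ(x)) ∑_{y ∼ x} ω(x,y) |f(y) - f(x)|^{p-2} (f(y) - f(x))`. -/
noncomputable def pLap {V : Type*} (ω : V → V → ℝ) (p : ℝ) (f : V → ℝ) (x : V) : ℝ :=
  (graphMu ω x)⁻¹ * ∑' y, ω x y * |f y - f x| ^ (p - 2) * (f y - f x)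

/-!
At `x0` a nonnegative solution `v = u(x0,·)` satisfies `Δ_p u(x0) ≥ -v^{p-1}` (every neighbour
is at height at least `0`), while `σ f(v) ≥ δ f(v) ≥ (1 + δε) v^{p-1}`. Hence
`v' ≥ δε v^{p-1}` with `p - 1 > 1`, so `v^{2-p} + δε(p-2) t` is nonincreasing; since `v^{2-p} > 0`
this is impossible once `t > v(0)^{2-p} / (δε(p-2))`.
-/

theorem neg_rpow_le_abs_rpow_mul_sub {a b p : ℝ} (ha : 0 ≤ a) (hb : 0 ≤ b) (hp : 1 ≤ p) :
    -a ^ (p - 1) ≤ |b - a| ^ (p - 2) * (b - a) := by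
  rcases le_or_gt a b with hab | hba
  · have := mul_nonneg (Real.rpow_nonneg (abs_nonneg (b - a)) (p - 2)) (sub_nonneg.2 hab)
    linarith [Real.rpow_nonneg ha (p - 1)]
  · have habs : |b - a| = a - b := by rw [abs_sub_comm, abs_of_pos (sub_pos.2 hba)]
    have hpow : |b - a| ^ (p - 2) * (b - a) = -(a - b) ^ (p - 1) := by
      rw [habs, show p - 1 = p - 2 + 1 by ring, Real.rpow_add_one (sub_pos.2 hba).ne']
      ring
    rw [hpow, neg_le_neg_iff]
    exact Real.rpow_le_rpow (sub_pos.2 hba).le (by linarith) (by linarith)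

theorem neg_rpow_le_pLap {V : Type*} {ω : V → V → ℝ} {x : V} (hω : ∀ y, 0 ≤ ω x y) {p : ℝ}
    (hp : 1 ≤ p) {g : V → ℝ} (hg : ∀ y, 0 ≤ g y) : -g x ^ (p - 1) ≤ pLap ω p g x := by
  have ha : 0 ≤ g x ^ (p - 1) := Real.rpow_nonneg (hg x) _
  have hμ : 0 ≤ graphMu ω x := tsum_nonneg hω
  rcases hμ.eq_or_lt with hμ | hμ
  · simp [pLap, ← hμ, ha]
  rw [pLap, le_inv_mul_iff₀ hμ]
  set S := ∑' y, ω x y * |g y - g x| ^ (p - 2) * (g y - g x)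
  by_cases hS : Summable fun y => ω x y * |g y - g x| ^ (p - 2) * (g y - g x)
  · have hω_summable : Summable (ω x) := by
      by_contra h
      simp [graphMu, tsum_eq_zero_of_not_summable h] at hμ
    calc graphMu ω x * -g x ^ (p - 1) = ∑' y, -(ω x y * g x ^ (p - 1)) := by
          rw [graphMu, tsum_neg, tsum_mul_right]; ring
      _ ≤ S := (hω_summable.mul_right _).neg.tsum_le_tsum (fun y => by
          rw [mul_assoc, ← mul_neg]
          exact mul_le_mul_of_nonneg_left
            (neg_rpow_le_abs_rpow_mul_sub (hg x) (hg y) hp) (hω y)) hS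
  · rw [show S = 0 from tsum_eq_zero_of_not_summable hS]
    nlinarith

theorem rpow_one_sub_add_mul_antitoneOn {v : ℝ → ℝ} {c q : ℝ} (hq : 1 < q)
    (hv : ContinuousOn v (Ici 0)) (hvd : DifferentiableOn ℝ v (Ioi 0))
    (hpos : ∀ t, 0 ≤ t → 0 < v t) (hderiv : ∀ t, 0 < t → c * v t ^ q ≤ deriv v t) :
    AntitoneOn (fun t => v t ^ (1 - q) + c * (q - 1) * t) (Ici 0) := by
  have hasDeriv : ∀ t, 0 < t → HasDerivAt (fun t => v t ^ (1 - q) + c * (q - 1) * t)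
      (deriv v t * (1 - q) * v t ^ (1 - q - 1) + c * (q - 1)) t := fun t ht =>
    (((hvd.differentiableAt (Ioi_mem_nhds ht)).hasDerivAt.rpow_const
      (Or.inl (hpos t ht.le).ne')).add ((hasDerivAt_id' t).const_mul (c * (q - 1)))).congr_deriv
      (by rw [mul_one])
  refine antitoneOn_of_deriv_nonpos (convex_Ici 0)
    ((hv.rpow_const fun t ht => Or.inl (hpos t ht).ne').add (by fun_prop)) ?_ ?_
  all_goals rw [interior_Ici]
  · exact fun t ht => (hasDeriv t ht).differentiableAt.differentiableWithinAt
  intro t ht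
  rw [(hasDeriv t ht).deriv, show 1 - q - 1 = -q by ring]
  have hvq : v t ^ q * v t ^ (-q) = 1 := by
    rw [← Real.rpow_add (hpos t ht.le), add_neg_cancel, Real.rpow_zero]
  have := mul_le_mul_of_nonneg_right (hderiv t ht)
    (mul_nonneg (sub_pos.2 hq).le (Real.rpow_pos_of_pos (hpos t ht.le) (-q)).le)
  linear_combination this - c * (q - 1) * hvq

theorem not_forall_rpow_le_deriv {v : ℝ → ℝ} {c q : ℝ} (hc : 0 < c) (hq : 1 < q)
    (hv : ContinuousOn v (Ici 0)) (hvd : DifferentiableOn ℝ v (Ioi 0))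
    (hv0 : 0 < v 0) (hnn : ∀ t, 0 ≤ t → 0 ≤ v t) :
    ¬ ∀ t, 0 < t → c * v t ^ q ≤ deriv v t := by
  intro hderiv
  have hmono : MonotoneOn v (Ici 0) := by
    refine monotoneOn_of_deriv_nonneg (convex_Ici 0) hv ?_ ?_ <;> rw [interior_Ici]
    · exact hvd
    · exact fun t ht => (mul_nonneg hc.le (Real.rpow_nonneg (hnn t ht.le) q)).trans (hderiv t ht)
  have hpos : ∀ t, 0 ≤ t → 0 < v t := fun t ht =>
    hv0.trans_le (hmono self_mem_Ici ht ht)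
  have hanti := rpow_one_sub_add_mul_antitoneOn hq hv hvd hpos hderiv
  have hk : 0 < c * (q - 1) := mul_pos hc (sub_pos.2 hq)
  set T := v 0 ^ (1 - q) / (c * (q - 1))
  have hT : 0 ≤ T := div_nonneg (Real.rpow_nonneg hv0.le _) hk.le
  have hdecay : v T ^ (1 - q) + c * (q - 1) * T ≤ v 0 ^ (1 - q) := by
    simpa using hanti self_mem_Ici hT hT
  have hkT : c * (q - 1) * T = v 0 ^ (1 - q) := mul_div_cancel₀ _ hk.ne'
  linarith [Real.rpow_pos_of_pos (hpos T hT) (1 - q)]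

theorem no_global_solution_inequality_superlinear_general
    {V : Type*} (ω : V → V → ℝ)
    (hnonneg : ∀ x y, 0 ≤ ω x y)
    (p : ℝ) (hp : 2 < p)
    (σ : V → ℝ → ℝ)
    (hσpos : ∀ x t, 0 ≤ t → 0 < σ x t)
    (f : ℝ → ℝ)
    (u0 : V → ℝ)
    (x0 : V) (hx0 : 0 < u0 x0)
    (δ : ℝ) (hδdef : δ = ⨅ t : Set.Ici (0 : ℝ), σ x0 t.1) (hδpos : 0 < δ)
    (ε : ℝ) (hε : 0 < ε)
    (hfgrow : ∀ s, 0 ≤ s → (1 / δ + ε) * s ^ (p - 1) ≤ f s) :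
    ¬ ∃ u : V → ℝ → ℝ,
      (∀ x, ContDiffOn ℝ 1 (u x) (Set.Ici 0)) ∧
      (∀ x t, 0 ≤ t → 0 ≤ u x t) ∧
      (∀ x, u x 0 = u0 x) ∧
      (∀ x t, 0 < t →
        σ x t * f (u x t) ≤
          derivWithin (u x) (Set.Ici 0) t - pLap ω p (fun y => u y t) x) := by
  rintro ⟨u, hC1, hnn, hinit, hineq⟩
  have hδσ : ∀ t, 0 ≤ t → δ ≤ σ x0 t := fun t ht => hδdef ▸
    ciInf_le ⟨0, by rintro _ ⟨s, rfl⟩; exact (hσpos x0 s s.2).le⟩ (⟨t, ht⟩ : Ici (0 : ℝ))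
  refine not_forall_rpow_le_deriv (mul_pos hδpos hε) (by linarith : 1 < p - 1)
    (hC1 x0).continuousOn ((hC1 x0).differentiableOn one_ne_zero |>.mono Ioi_subset_Ici_self)
    (hinit x0 ▸ hx0) (hnn x0) fun t ht => ?_
  set v := u x0 t
  have hv : 0 ≤ v ^ (p - 1) := Real.rpow_nonneg (hnn x0 t ht.le) _
  have hf : (1 / δ + ε) * v ^ (p - 1) ≤ f v := hfgrow v (hnn x0 t ht.le)
  have hreaction : v ^ (p - 1) + δ * ε * v ^ (p - 1) ≤ σ x0 t * f v := calc
    _ = δ * ((1 / δ + ε) * v ^ (p - 1)) := by field_simp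
    _ ≤ δ * f v := mul_le_mul_of_nonneg_left hf hδpos.le
    _ ≤ σ x0 t * f v := mul_le_mul_of_nonneg_right (hδσ t ht.le)
      ((mul_nonneg (by positivity) hv).trans hf)
  have hdiffusion := neg_rpow_le_pLap (hnonneg x0) (by linarith : 1 ≤ p) fun y => hnn y t ht.le
  have hderiv : derivWithin (u x0) (Ici 0) t = deriv (u x0) t :=
    derivWithin_of_mem_nhds (Ici_mem_nhds ht)
  linarith [hineq x0 t ht]

/-- on a connected, locally finite weighted graph, if `u0(x0) > 0`,
`δ := inf_{t ≥ 0} σ(x0,t) > 0` and `f(s) ≥ (1/δ + ε) s^{p-1}` for all `s ≥ 0` (some fixed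
`ε > 0`), then the parabolic inequality `u_t - Δ_p u ≥ σ(x,t) f(u)`, `u(·,0) = u0`, admits
no nonnegative solution defined for all `t ≥ 0` that is `C¹` in time at each vertex. -/
theorem no_global_solution_inequality_superlinear
    {V : Type*} (ω : V → V → ℝ)
    (hsymm : ∀ x y, ω x y = ω y x)
    (hnonneg : ∀ x y, 0 ≤ ω x y)
    (hloop : ∀ x, ω x x = 0)
    (hlf : ∀ x, (Function.support (ω x)).Finite)
    (hconn : ∀ x y, Relation.ReflTransGen (fun a b => 0 < ω a b) x y)
    (p : ℝ) (hp : 2 < p)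
    (σ : V → ℝ → ℝ)
    (hσpos : ∀ x t, 0 ≤ t → 0 < σ x t)
    (hσcont : ∀ x, ContinuousOn (σ x) (Set.Ici 0))
    (f : ℝ → ℝ) (hf : LocallyLipschitz f) (hf0 : f 0 = 0)
    (u0 : V → ℝ) (hu0nn : ∀ x, 0 ≤ u0 x) (hu0bd : ∃ M, ∀ x, u0 x ≤ M)
    (x0 : V) (hx0 : 0 < u0 x0)
    (δ : ℝ) (hδdef : δ = ⨅ t : Set.Ici (0 : ℝ), σ x0 t.1) (hδpos : 0 < δ)
    (ε : ℝ) (hε : 0 < ε)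
    (hfgrow : ∀ s, 0 ≤ s → (1 / δ + ε) * s ^ (p - 1) ≤ f s) :
    ¬ ∃ u : V → ℝ → ℝ,
      (∀ x, ContDiffOn ℝ 1 (u x) (Set.Ici 0)) ∧
      (∀ x t, 0 ≤ t → 0 ≤ u x t) ∧
      (∀ x, u x 0 = u0 x) ∧
      (∀ x t, 0 < t →
        σ x t * f (u x t) ≤
          derivWithin (u x) (Set.Ici 0) t - pLap ω p (fun y => u y t) x) :=
  no_global_solution_inequality_superlinear_general ω hnonneg p hp σ hσpos f u0 x0 hx0 δ hδdef hδpos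
    ε hε hfgrow
end

section
/- Assume in addition that for every T0>0 there is M>0 with σ(x,t) ≤ M for all x∈V and t∈[0,T0]. Then there exist T>0 and a bounded function u:V×[0,T]→ℝ with u(x,·) continuous on [0,T] for every x∈V such that u(x,t) = u0(x) + ∫_0^t Δ_p u(x,s) ds + ∫_0^t σ(x,s) f(u(x,s)) ds for all x∈V and t∈[0,T]; in particular the problem u_t − Δ_p u = σ(x,t)f(u) on V×(0,T], u(·,0)=u0, has at least one local-in-time solution with u(x,·)∈C¹ for each x. -/
/-! Picard iteration. On the closed ball of radius `1` around `u0` in the bounded functions on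
`V × ℝ` that are continuous in time at every vertex, `u ↦ u0 + ∫₀ᵗ (Δ_p u + σ f(u)) ds` is a
contraction once `T` is small. Since `p > 2`, `t ↦ |t|^{p-2} t` is Lipschitz on bounded sets, and
`Δ_p u(x)` is a weighted mean of such terms, so its Lipschitz constant is independent of the
vertex and its degree; `f` is Lipschitz and `σ` bounded on the relevant bounded sets. The fixed
point solves the integral equation. -/

open scoped ENNReal
open Classical Filter Set

open Topology
open scoped BoundedContinuousFunction

theorem hasDerivAt_abs_rpow_mul_self {q : ℝ} (hq : 0 < q) (s : ℝ) :
    HasDerivAt (fun t : ℝ => |t| ^ q * t) ((q + 1) * |s| ^ q) s := by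
  rcases eq_or_ne s 0 with rfl | hs
  · rw [abs_zero, Real.zero_rpow hq.ne', mul_zero, hasDerivAt_iff_isLittleO]
    have hlim : Tendsto (fun t : ℝ => |t| ^ q) (𝓝 0) (𝓝 0) := by
      simpa [Real.zero_rpow hq.ne'] using
        (continuous_abs.rpow_const fun _ => Or.inr hq.le).tendsto (0 : ℝ)
    simpa using (Asymptotics.isLittleO_one_iff ℝ).2 hlim |>.mul_isBigO
      (Asymptotics.isBigO_refl (fun t : ℝ => t) (𝓝 0))
  · refine (((hasDerivAt_abs hs).rpow_const (p := q) (Or.inl (abs_ne_zero.2 hs))).mul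
      (hasDerivAt_id s)).congr_deriv ?_
    have : |s| ^ (q - 1) * (SignType.sign s * s) = |s| ^ q := by
      rw [sign_mul_self, ← Real.rpow_add_one (abs_ne_zero.2 hs), sub_add_cancel]
    rw [id_eq]
    linear_combination q * this

theorem abs_abs_rpow_mul_self_sub_le {q R a b : ℝ} (hq : 0 < q) (ha : |a| ≤ R) (hb : |b| ≤ R) :
    |(|a| ^ q * a) - |b| ^ q * b| ≤ (q + 1) * R ^ q * |a - b| := by
  have hderiv (s : ℝ) (hs : s ∈ Icc (-R) R) : ‖(q + 1) * |s| ^ q‖ ≤ (q + 1) * R ^ q := by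
    rw [Real.norm_eq_abs, abs_of_nonneg (by positivity)]
    gcongr
    exact abs_le.2 hs
  simpa only [Real.norm_eq_abs] using
    (convex_Icc (-R) R).norm_image_sub_le_of_norm_hasDerivWithin_le
      (fun s _ => (hasDerivAt_abs_rpow_mul_self hq s).hasDerivWithinAt) hderiv
      (abs_le.1 hb) (abs_le.1 ha)

theorem abs_inv_sum_mul_sum_le {ι : Type*} (s : Finset ι) {w g : ι → ℝ} {c : ℝ}
    (hw : ∀ i ∈ s, 0 ≤ w i) (hg : ∀ i ∈ s, |g i| ≤ c) (hc : 0 ≤ c) :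
    |(∑ i ∈ s, w i)⁻¹ * ∑ i ∈ s, w i * g i| ≤ c := by
  rcases (Finset.sum_nonneg hw).eq_or_lt with h | h
  · rw [← h, inv_zero, zero_mul, abs_zero]
    exact hc
  rw [abs_mul, abs_inv, abs_of_pos h, inv_mul_le_iff₀ h]
  calc |∑ i ∈ s, w i * g i| ≤ ∑ i ∈ s, w i * c := by
        refine (Finset.abs_sum_le_sum_abs _ _).trans (Finset.sum_le_sum fun i hi => ?_)
        rw [abs_mul, abs_of_nonneg (hw i hi)]
        exact mul_le_mul_of_nonneg_left (hg i hi) (hw i hi)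
    _ = (∑ i ∈ s, w i) * c := (Finset.sum_mul _ _ _).symm

section Picard

variable {V : Type*} (u0 : V → ℝ) (F : V → ℝ → (V → ℝ) → ℝ) {T : ℝ} (hT : 0 ≤ T)

/-- Time is clamped to `[0, T]`, so that the iterates are bounded and continuous on all of
`V × ℝ` while `F` is only controlled for times in `[0, T]`. -/
noncomputable def picardMap (u : V → ℝ → ℝ) (x : V) (t : ℝ) : ℝ :=
  u0 x + ∫ s in (0 : ℝ)..(projIcc 0 T hT t : ℝ), F x s (fun y => u y s)

variable {u0 F hT}

theorem picardMap_of_mem_Icc (u : V → ℝ → ℝ) (x : V) {t : ℝ} (ht : t ∈ Icc 0 T) :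
    picardMap u0 F hT u x t = u0 x + ∫ s in (0 : ℝ)..t, F x s (fun y => u y s) := by
  rw [picardMap, projIcc_of_mem hT ht]

theorem continuous_picardMap {u : V → ℝ → ℝ} {x : V}
    (hu : ContinuousOn (fun s => F x s (fun y => u y s)) (Icc 0 T)) :
    Continuous (picardMap u0 F hT u x) := by
  have hprim := intervalIntegral.continuousOn_primitive_interval (μ := MeasureTheory.volume)
    (a := 0) (b := T) (by rw [uIcc_of_le hT]; exact hu.integrableOn_compact isCompact_Icc)
  rw [uIcc_of_le hT] at hprim
  exact continuous_const.add <| hprim.comp_continuous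
    (continuous_subtype_val.comp continuous_projIcc) fun t => (projIcc 0 T hT t).2

theorem abs_intervalIntegral_le_of_mem_Icc {g : ℝ → ℝ} {c t : ℝ}
    (hg : ∀ s ∈ Icc 0 T, |g s| ≤ c) (ht : t ∈ Icc 0 T) :
    |∫ s in (0 : ℝ)..t, g s| ≤ c * T := by
  have hc : 0 ≤ c := (abs_nonneg _).trans (hg 0 ⟨le_rfl, ht.1.trans ht.2⟩)
  calc |∫ s in (0 : ℝ)..t, g s| ≤ c * |t - 0| :=
        intervalIntegral.norm_integral_le_of_norm_le_const (f := g) fun s hs => by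
          rw [uIoc_of_le ht.1] at hs
          exact hg s ⟨hs.1.le, hs.2.trans ht.2⟩
    _ ≤ c * T := by
        rw [sub_zero, abs_of_nonneg ht.1]
        exact mul_le_mul_of_nonneg_left ht.2 hc

theorem abs_picardMap_sub_initial_le {u : V → ℝ → ℝ} {x : V} {c : ℝ}
    (hF : ∀ s ∈ Icc 0 T, |F x s (fun y => u y s)| ≤ c) (t : ℝ) :
    |picardMap u0 F hT u x t - u0 x| ≤ c * T := by
  rw [picardMap, add_sub_cancel_left]
  exact abs_intervalIntegral_le_of_mem_Icc hF (projIcc 0 T hT t).2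

theorem abs_picardMap_sub_le {u w : V → ℝ → ℝ} {x : V} {c : ℝ}
    (hu : ContinuousOn (fun s => F x s (fun y => u y s)) (Icc 0 T))
    (hw : ContinuousOn (fun s => F x s (fun y => w y s)) (Icc 0 T))
    (hF : ∀ s ∈ Icc 0 T, |F x s (fun y => u y s) - F x s (fun y => w y s)| ≤ c) (t : ℝ) :
    |picardMap u0 F hT u x t - picardMap u0 F hT w x t| ≤ c * T := by
  have hsub : uIcc 0 (projIcc 0 T hT t : ℝ) ⊆ Icc 0 T :=
    uIcc_subset_Icc ⟨le_rfl, hT⟩ (projIcc 0 T hT t).2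
  rw [picardMap, picardMap, add_sub_add_left_eq_sub, ← intervalIntegral.integral_sub
    ((hu.mono hsub).intervalIntegrable) ((hw.mono hsub).intervalIntegrable)]
  exact abs_intervalIntegral_le_of_mem_Icc hF (projIcc 0 T hT t).2

variable {C K : ℝ}

theorem exists_fixedPoint_picardMap (hu0 : ∃ M, ∀ x, |u0 x| ≤ M)
    (hcont : ∀ u : V → ℝ → ℝ, (∀ y, Continuous (u y)) →
      ∀ x, ContinuousOn (fun s => F x s (fun y => u y s)) (Icc 0 T))
    (hbound : ∀ x, ∀ s ∈ Icc 0 T, ∀ v : V → ℝ, (∀ y, |v y - u0 y| ≤ 1) → |F x s v| ≤ C)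
    (hlip : ∀ x, ∀ s ∈ Icc 0 T, ∀ v w : V → ℝ, (∀ y, |v y - u0 y| ≤ 1) →
      (∀ y, |w y - u0 y| ≤ 1) → ∀ d, (∀ y, |v y - w y| ≤ d) → |F x s v - F x s w| ≤ K * d)
    (hCT : C * T ≤ 1) (hKT : K * T < 1) :
    ∃ u : V → ℝ → ℝ, (∀ x, Continuous (u x)) ∧ (∀ x t, |u x t - u0 x| ≤ 1) ∧
      ∀ x t, u x t = picardMap u0 F hT u x t := by
  -- with the discrete topology on `V`, continuity on `V × ℝ` is continuity in time at each vertex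
  let : TopologicalSpace V := ⊥
  have : DiscreteTopology V := ⟨rfl⟩
  obtain ⟨M, hM⟩ := hu0
  let U0 : V × ℝ →ᵇ ℝ := .ofNormedAddCommGroup (fun z => u0 z.1)
    ((continuous_of_discreteTopology (f := u0)).comp continuous_fst) M fun z => hM z.1
  let S := Metric.closedBall U0 1
  have mem_S {u : V × ℝ →ᵇ ℝ} : u ∈ S ↔ ∀ x s, |u (x, s) - u0 x| ≤ 1 := by
    rw [Metric.mem_closedBall, BoundedContinuousFunction.dist_le zero_le_one, Prod.forall]; rfl
  have slice_cont (u : V × ℝ →ᵇ ℝ) (x : V) : Continuous fun s => u (x, s) :=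
    u.continuous.comp (Continuous.prodMk_right x)
  have picard_close (u : S) (x : V) (t : ℝ) :
      |picardMap u0 F hT (fun y s => u.1 (y, s)) x t - u0 x| ≤ 1 :=
    (abs_picardMap_sub_initial_le (fun s hs => hbound x s hs _ fun y => mem_S.1 u.2 y s) t).trans
      hCT
  let Φ : S → S := fun u =>
    ⟨.ofNormedAddCommGroup (fun z => picardMap u0 F hT (fun y s => u.1 (y, s)) z.1 z.2)
      (continuous_prod_of_discrete_left.2 fun x =>
        continuous_picardMap (hcont _ (slice_cont u.1) x))
      (M + 1) fun z => (Real.norm_eq_abs _).trans_le <| by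
        linarith [abs_sub_abs_le_abs_sub (picardMap u0 F hT (fun y s => u.1 (y, s)) z.1 z.2)
          (u0 z.1), picard_close u z.1 z.2, hM z.1],
      mem_S.2 (picard_close u)⟩
  have hΦ : ContractingWith (K * T).toNNReal Φ := by
    refine ⟨Real.toNNReal_lt_one.2 hKT, LipschitzWith.of_dist_le_mul fun u w => ?_⟩
    rw [Subtype.dist_eq, Subtype.dist_eq, BoundedContinuousFunction.dist_le (by positivity)]
    rintro ⟨x, t⟩
    refine (abs_picardMap_sub_le (hcont _ (slice_cont u.1) x) (hcont _ (slice_cont w.1) x)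
      (fun s hs => hlip x s hs _ _ (fun y => mem_S.1 u.2 y s) (fun y => mem_S.1 w.2 y s) _
        fun y => (Real.dist_eq _ _).symm.trans_le (u.1.dist_coe_le_dist _)) t).trans ?_
    rw [mul_right_comm]
    exact mul_le_mul_of_nonneg_right (Real.le_coe_toNNReal _) dist_nonneg
  have : CompleteSpace S := Metric.isClosed_closedBall.completeSpace_coe
  have : Nonempty S := ⟨⟨U0, Metric.mem_closedBall_self zero_le_one⟩⟩
  let u := ContractingWith.fixedPoint Φ hΦ
  have hu : Φ u = u := hΦ.fixedPoint_isFixedPt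
  exact ⟨fun x t => u.1 (x, t), slice_cont u.1, fun x t => mem_S.1 u.2 x t,
    fun x t => (DFunLike.congr_fun (congrArg Subtype.val hu) (x, t)).symm⟩

theorem exists_local_integral_solution {T₀ : ℝ} (hT₀ : 0 < T₀) (hu0 : ∃ M, ∀ x, |u0 x| ≤ M)
    (hcont : ∀ u : V → ℝ → ℝ, (∀ y, Continuous (u y)) →
      ∀ x, ContinuousOn (fun s => F x s (fun y => u y s)) (Icc 0 T₀))
    (hbound : ∀ x, ∀ s ∈ Icc 0 T₀, ∀ v : V → ℝ, (∀ y, |v y - u0 y| ≤ 1) → |F x s v| ≤ C)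
    (hlip : ∀ x, ∀ s ∈ Icc 0 T₀, ∀ v w : V → ℝ, (∀ y, |v y - u0 y| ≤ 1) →
      (∀ y, |w y - u0 y| ≤ 1) → ∀ d, (∀ y, |v y - w y| ≤ d) → |F x s v - F x s w| ≤ K * d) :
    ∃ T > 0, ∃ u : V → ℝ → ℝ, (∀ x, Continuous (u x)) ∧ (∀ x t, |u x t - u0 x| ≤ 1) ∧
      ∀ x, ∀ t ∈ Icc 0 T, u x t = u0 x + ∫ s in (0 : ℝ)..t, F x s (fun y => u y s) := by
  set T := min T₀ (1 / (|C| + |K| + 1))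
  have hT : 0 < T := lt_min hT₀ (by positivity)
  have hsub : Icc 0 T ⊆ Icc 0 T₀ := Icc_subset_Icc_right (min_le_left _ _)
  have hsmall {c : ℝ} (hc : |c| ≤ |C| + |K|) : c * T < 1 := by
    have : (|C| + |K| + 1) * T ≤ 1 :=
      calc (|C| + |K| + 1) * T ≤ (|C| + |K| + 1) * (1 / (|C| + |K| + 1)) :=
            mul_le_mul_of_nonneg_left (min_le_right _ _) (by positivity)
        _ = 1 := by field_simp
    nlinarith [le_abs_self c]
  obtain ⟨u, hu, hclose, hfix⟩ := exists_fixedPoint_picardMap (hT := hT.le) hu0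
    (fun u hu x => (hcont u hu x).mono hsub) (fun x s hs => hbound x s (hsub hs))
    (fun x s hs => hlip x s (hsub hs)) (hsmall (by simp)).le (hsmall (by simp))
  exact ⟨T, hT, u, hu, hclose, fun x t ht => (hfix x t).trans (picardMap_of_mem_Icc u x ht)⟩

end Picard

section pLap

variable {V : Type*} {ω : V → V → ℝ} (hlf : ∀ x, (Function.support (ω x)).Finite) {p : ℝ}

include hlf in
theorem pLap_eq_sum (a : V → ℝ) (x : V) :
    pLap ω p a x = (∑ y ∈ (hlf x).toFinset, ω x y)⁻¹ *
      ∑ y ∈ (hlf x).toFinset, ω x y * (|a y - a x| ^ (p - 2) * (a y - a x)) := by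
  rw [pLap, graphMu, tsum_eq_sum' (hlf x).coe_toFinset.ge]
  simp only [mul_assoc]
  rw [tsum_eq_sum' ((Function.support_mul_subset_left _ _).trans (hlf x).coe_toFinset.ge)]

include hlf in
theorem continuous_pLap {u : V → ℝ → ℝ} (hu : ∀ y, Continuous (u y)) (hp : 2 ≤ p) (x : V) :
    Continuous fun s => pLap ω p (fun y => u y s) x := by
  simp only [pLap_eq_sum hlf]
  refine continuous_const.mul (continuous_finsetSum _ fun y _ => continuous_const.mul ?_)
  have hdiff : Continuous fun s => u y s - u x s := (hu y).sub (hu x)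
  exact (hdiff.abs.rpow_const fun _ => Or.inr (by linarith)).mul hdiff

variable (hnonneg : ∀ x y, 0 ≤ ω x y)
include hlf hnonneg

theorem abs_pLap_sub_pLap_le (hp : 2 < p) {R d : ℝ} {a b : V → ℝ} (ha : ∀ y, |a y| ≤ R)
    (hb : ∀ y, |b y| ≤ R) (hab : ∀ y, |a y - b y| ≤ d) (x : V) :
    |pLap ω p a x - pLap ω p b x| ≤ (p - 1) * (2 * R) ^ (p - 2) * (2 * d) := by
  have hR : 0 ≤ R := (abs_nonneg _).trans (ha x)
  have hd : 0 ≤ d := (abs_nonneg _).trans (hab x)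
  have hdiff {c : V → ℝ} (hc : ∀ y, |c y| ≤ R) (y : V) : |c y - c x| ≤ 2 * R := by
    linarith [abs_sub (c y) (c x), hc y, hc x]
  rw [pLap_eq_sum hlf, pLap_eq_sum hlf, ← mul_sub, ← Finset.sum_sub_distrib]
  simp_rw [← mul_sub]
  refine abs_inv_sum_mul_sum_le _ (fun y _ => hnonneg x y) (fun y _ => ?_)
    (mul_nonneg (mul_nonneg (by linarith) (by positivity)) (by positivity))
  calc _ ≤ (p - 2 + 1) * (2 * R) ^ (p - 2) * |(a y - a x) - (b y - b x)| :=
        abs_abs_rpow_mul_self_sub_le (by linarith) (hdiff ha y) (hdiff hb y)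
    _ ≤ (p - 1) * (2 * R) ^ (p - 2) * (2 * d) := by
        rw [show p - 2 + 1 = p - 1 by ring]
        refine mul_le_mul_of_nonneg_left ?_ (mul_nonneg (by linarith) (by positivity))
        rw [show (a y - a x) - (b y - b x) = (a y - b y) - (a x - b x) by ring]
        linarith [abs_sub (a y - b y) (a x - b x), hab y, hab x]

theorem abs_pLap_le (hp : 2 < p) {R : ℝ} {a : V → ℝ} (ha : ∀ y, |a y| ≤ R) (x : V) :
    |pLap ω p a x| ≤ (p - 1) * (2 * R) ^ (p - 2) * (2 * (2 * R)) := by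
  have := abs_pLap_sub_pLap_le hlf hnonneg hp (b := fun _ => a x) (d := 2 * R) ha (fun _ => ha x)
    (fun y => by linarith [abs_sub (a y) (a x), ha y, ha x]) x
  rwa [show pLap ω p (fun _ => a x) x = 0 by simp [pLap], sub_zero] at this

end pLap

section semilinear

variable {V : Type*} {ω : V → V → ℝ} (hlf : ∀ x, (Function.support (ω x)).Finite) {p : ℝ}
  {σ : V → ℝ → ℝ} {f : ℝ → ℝ}

noncomputable def semilinearField (ω : V → V → ℝ) (p : ℝ) (σ : V → ℝ → ℝ) (f : ℝ → ℝ)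
    (x : V) (s : ℝ) (v : V → ℝ) : ℝ :=
  pLap ω p v x + σ x s * f (v x)

include hlf in
theorem integral_semilinearField (hp : 2 ≤ p) {x : V} (hσ : ContinuousOn (σ x) (Ici 0))
    (hf : Continuous f) {u : V → ℝ → ℝ} (hu : ∀ y, Continuous (u y)) {t : ℝ} (ht : 0 ≤ t) :
    ∫ s in (0 : ℝ)..t, semilinearField ω p σ f x s (fun y => u y s) =
      (∫ s in (0 : ℝ)..t, pLap ω p (fun y => u y s) x) + ∫ s in (0 : ℝ)..t, σ x s * f (u x s) := by
  have hsub : uIcc 0 t ⊆ Ici 0 := fun s hs => ((uIcc_of_le ht) ▸ hs).1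
  exact intervalIntegral.integral_add ((continuous_pLap hlf hu hp x).intervalIntegrable _ _)
    ((hσ.mono hsub).mul (hf.comp (hu x)).continuousOn).intervalIntegrable

include hlf in
theorem continuousOn_semilinearField (hp : 2 ≤ p) {x : V} (hσ : ContinuousOn (σ x) (Ici 0))
    (hf : Continuous f) {u : V → ℝ → ℝ} (hu : ∀ y, Continuous (u y)) :
    ContinuousOn (fun s => semilinearField ω p σ f x s (fun y => u y s)) (Ici 0) :=
  (continuous_pLap hlf hu hp x).continuousOn.add (hσ.mul (hf.comp (hu x)).continuousOn)

variable (hnonneg : ∀ x y, 0 ≤ ω x y)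
include hlf hnonneg

theorem abs_semilinearField_le (hp : 2 < p) {x : V} {s R B M : ℝ} (hσ : σ x s ∈ Icc 0 M)
    (hfB : ∀ a ∈ Icc (-R) R, |f a| ≤ B) {v : V → ℝ} (hv : ∀ y, |v y| ≤ R) :
    |semilinearField ω p σ f x s v| ≤ (p - 1) * (2 * R) ^ (p - 2) * (2 * (2 * R)) + M * B := by
  have hreact : |σ x s * f (v x)| ≤ M * B := by
    rw [abs_mul, abs_of_nonneg hσ.1]
    exact mul_le_mul hσ.2 (hfB _ (abs_le.1 (hv x))) (abs_nonneg _) (hσ.1.trans hσ.2)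
  exact (abs_add_le _ _).trans (add_le_add (abs_pLap_le hlf hnonneg hp hv x) hreact)

theorem abs_semilinearField_sub_le (hp : 2 < p) {x : V} {s R M d : ℝ} {L : NNReal}
    (hσ : σ x s ∈ Icc 0 M) (hfL : LipschitzOnWith L f (Icc (-R) R)) {v w : V → ℝ}
    (hv : ∀ y, |v y| ≤ R) (hw : ∀ y, |w y| ≤ R) (hvw : ∀ y, |v y - w y| ≤ d) :
    |semilinearField ω p σ f x s v - semilinearField ω p σ f x s w| ≤
      ((p - 1) * (2 * R) ^ (p - 2) * 2 + M * L) * d := by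
  have hreact : |σ x s * f (v x) - σ x s * f (w x)| ≤ M * L * d := by
    have hLip : |f (v x) - f (w x)| ≤ L * d := by
      simpa only [Real.dist_eq] using (hfL.dist_le_mul _ (abs_le.1 (hv x)) _
        (abs_le.1 (hw x))).trans (mul_le_mul_of_nonneg_left (hvw x) L.2)
    rw [← mul_sub, abs_mul, abs_of_nonneg hσ.1, mul_assoc]
    exact mul_le_mul hσ.2 hLip (abs_nonneg _) (hσ.1.trans hσ.2)
  calc _ = |(pLap ω p v x - pLap ω p w x) + (σ x s * f (v x) - σ x s * f (w x))| := by
        rw [semilinearField, semilinearField]; ring_nf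
    _ ≤ (p - 1) * (2 * R) ^ (p - 2) * (2 * d) + M * L * d :=
        (abs_add_le _ _).trans (add_le_add (abs_pLap_sub_pLap_le hlf hnonneg hp hv hw hvw x) hreact)
    _ = _ := by ring

end semilinear

theorem local_existence_on_graph_general
    {V : Type*} (ω : V → V → ℝ)
    (hnonneg : ∀ x y, 0 ≤ ω x y)
    (hlf : ∀ x, (Function.support (ω x)).Finite)
    (p : ℝ) (hp : 2 < p)
    (σ : V → ℝ → ℝ)
    (hσpos : ∀ x t, 0 ≤ t → 0 < σ x t)
    (hσcont : ∀ x, ContinuousOn (σ x) (Set.Ici 0))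
    (hσbd : ∀ T0 : ℝ, 0 < T0 → ∃ M, ∀ x, ∀ t ∈ Set.Icc (0 : ℝ) T0, σ x t ≤ M)
    (f : ℝ → ℝ) (hf : LocallyLipschitz f)
    (u0 : V → ℝ) (hu0nn : ∀ x, 0 ≤ u0 x) (hu0bd : ∃ M, ∀ x, u0 x ≤ M) :
    ∃ T > (0 : ℝ), ∃ u : V → ℝ → ℝ,
      (∃ M, ∀ x, ∀ t ∈ Set.Icc (0 : ℝ) T, |u x t| ≤ M) ∧
      (∀ x, ContinuousOn (u x) (Set.Icc 0 T)) ∧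
      (∀ x, ∀ t ∈ Set.Icc (0 : ℝ) T,
        u x t = u0 x + (∫ s in (0 : ℝ)..t, pLap ω p (fun y => u y s) x)
          + ∫ s in (0 : ℝ)..t, σ x s * f (u x s)) := by
  obtain ⟨M₀, hM₀⟩ := hu0bd
  have hu0 (x : V) : |u0 x| ≤ M₀ := abs_le.2 ⟨by linarith [hu0nn x, hM₀ x], hM₀ x⟩
  have hball {v : V → ℝ} (hv : ∀ y, |v y - u0 y| ≤ 1) (y : V) : |v y| ≤ M₀ + 1 := by
    linarith [abs_sub_abs_le_abs_sub (v y) (u0 y), hv y, hu0 y]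
  obtain ⟨L, hL⟩ := hf.locallyLipschitzOn.exists_lipschitzOnWith_of_compact
    (isCompact_Icc (a := -(M₀ + 1)) (b := M₀ + 1))
  obtain ⟨B, hB⟩ := isCompact_Icc.exists_bound_of_continuousOn
    (hf.continuous.continuousOn (s := Icc (-(M₀ + 1)) (M₀ + 1)))
  obtain ⟨M, hM⟩ := hσbd 1 one_pos
  have hσ (x : V) (s : ℝ) (hs : s ∈ Icc 0 1) : σ x s ∈ Icc 0 M := ⟨(hσpos x s hs.1).le, hM x s hs⟩
  obtain ⟨T, hT, u, hu, hclose, hsol⟩ :=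
    exists_local_integral_solution (F := semilinearField ω p σ f) one_pos ⟨M₀, hu0⟩
      (fun u hu x => (continuousOn_semilinearField hlf hp.le (hσcont x) hf.continuous hu).mono
        Icc_subset_Ici_self)
      (fun x s hs v hv => abs_semilinearField_le hlf hnonneg hp (hσ x s hs) hB (hball hv))
      (fun x s hs v w hv hw d hvw =>
        abs_semilinearField_sub_le hlf hnonneg hp (hσ x s hs) hL (hball hv) (hball hw) hvw)
  refine ⟨T, hT, u, ⟨M₀ + 1, fun x t _ => hball (hclose · t) x⟩, fun x => (hu x).continuousOn,
    fun x t ht => ?_⟩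
  rw [hsol x t ht, add_assoc,
    integral_semilinearField hlf hp.le (hσcont x) hf.continuous hu ht.1]

/-- local-in-time existence for `u_t - Δ_p u = σ(x,t) f(u)`, `u(·,0) = u0`,
on a locally finite connected weighted graph, stated in integral form: there are `T > 0`
and a bounded function `u` on `V × [0,T]`, continuous in time at each vertex, with
`u(x,t) = u0(x) + ∫_0^t Δ_p u(x,s) ds + ∫_0^t σ(x,s) f(u(x,s)) ds`. -/
theorem local_existence_on_graph
    {V : Type*} (ω : V → V → ℝ)
    (hsymm : ∀ x y, ω x y = ω y x)
    (hnonneg : ∀ x y, 0 ≤ ω x y)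
    (hloop : ∀ x, ω x x = 0)
    (hlf : ∀ x, (Function.support (ω x)).Finite)
    (hconn : ∀ x y, Relation.ReflTransGen (fun a b => 0 < ω a b) x y)
    (p : ℝ) (hp : 2 < p)
    (σ : V → ℝ → ℝ)
    (hσpos : ∀ x t, 0 ≤ t → 0 < σ x t)
    (hσcont : ∀ x, ContinuousOn (σ x) (Set.Ici 0))
    (hσbd : ∀ T0 : ℝ, 0 < T0 → ∃ M, ∀ x, ∀ t ∈ Set.Icc (0 : ℝ) T0, σ x t ≤ M)
    (f : ℝ → ℝ) (hf : LocallyLipschitz f) (hf0 : f 0 = 0)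
    (u0 : V → ℝ) (hu0nn : ∀ x, 0 ≤ u0 x) (hu0bd : ∃ M, ∀ x, u0 x ≤ M) :
    ∃ T > (0 : ℝ), ∃ u : V → ℝ → ℝ,
      (∃ M, ∀ x, ∀ t ∈ Set.Icc (0 : ℝ) T, |u x t| ≤ M) ∧
      (∀ x, ContinuousOn (u x) (Set.Icc 0 T)) ∧
      (∀ x, ∀ t ∈ Set.Icc (0 : ℝ) T,
        u x t = u0 x + (∫ s in (0 : ℝ)..t, pLap ω p (fun y => u y s) x)
          + ∫ s in (0 : ℝ)..t, σ x s * f (u x s)) :=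
  local_existence_on_graph_general ω hnonneg hlf p hp σ hσpos hσcont hσbd f hf u0 hu0nn hu0bd
end

section
/- (Comparison principle) Let T∈(0,∞], p>2, and let U⊆V be finite. Let u,v:Ū×[0,T)→ℝ be such that u(x,·),v(x,·)∈C¹([0,T)) for every x∈U. Suppose u_t(x,t) − Δ_p|_U u(x,t) − σ(x,t)f(u(x,t)) ≥ v_t(x,t) − Δ_p|_U v(x,t) − σ(x,t)f(v(x,t)) for all (x,t)∈U×(0,T), u(x,t) ≥ v(x,t) for all (x,t)∈∂U×[0,T), and u(x,0) ≥ v(x,0) for all x∈U. Then u(x,t) ≥ v(x,t) for all (x,t)∈Ū×[0,T). -/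
open scoped ENNReal
open Classical Filter Set

/-- The (outer vertex) boundary of `U`: vertices outside `U` adjacent to some vertex of `U`. -/
def bdry {V : Type*} (ω : V → V → ℝ) (U : Set V) : Set V :=
  {x | x ∉ U ∧ ∃ y ∈ U, 0 < ω x y}

/-- `Ū = U ∪ ∂U`. -/
def vclosure {V : Type*} (ω : V → V → ℝ) (U : Set V) : Set V := U ∪ bdry ω U

/-- The time interval `[0,T)` for an extended-real time horizon `T ∈ (0,∞]`. -/
def ITv (T : ℝ≥0∞) : Set ℝ := {t : ℝ | 0 ≤ t ∧ ENNReal.ofReal t < T}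

/-!
Let `m(t) = max (0, max_{x ∈ U} (v - u)(x, t))`. At a vertex `x ∈ U` where this maximum is attained
and nonnegative, `v - u` is at least its value at every neighbour (on `∂U` because `v ≤ u` there),
so monotonicity of `s ↦ |s|^{p-2} s` gives `Δ_p v(x) ≤ Δ_p u(x)`. Since `σ` is bounded and `f` is
Lipschitz on the compact range of `u` and `v` up to time `t`, the differential inequality then
bounds the right Dini derivative of `m` by `C m`, and Gronwall's inequality with `m(0) = 0` gives
`m ≡ 0` on `[0, t]`.
-/

open scoped Topology

lemma monotone_abs_rpow_mul_self {q : ℝ} (hq : 0 ≤ q) :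
    Monotone fun s : ℝ => |s| ^ q * s := by
  have hIci : MonotoneOn (fun s : ℝ => |s| ^ q * s) (Ici 0) := by
    intro a ha b hb hab
    simp only [abs_of_nonneg (mem_Ici.1 ha), abs_of_nonneg (mem_Ici.1 hb)]
    exact mul_le_mul (Real.rpow_le_rpow ha hab hq) hab ha (Real.rpow_nonneg hb _)
  refine MonotoneOn.Iic_union_Ici (a := 0) (fun a ha b hb hab => ?_) hIci
  have := hIci (mem_Ici.2 (neg_nonneg.2 hb)) (mem_Ici.2 (neg_nonneg.2 ha)) (neg_le_neg hab)
  simp only [abs_neg] at this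
  linarith

lemma pLap_le_pLap {V : Type*} (ω : V → V → ℝ) (hnonneg : ∀ x y, 0 ≤ ω x y)
    (hlf : ∀ x, (Function.support (ω x)).Finite) {p : ℝ} (hp : 2 ≤ p) {F G : V → ℝ} {x : V}
    (h : ∀ y, ω x y ≠ 0 → F y - F x ≤ G y - G x) :
    pLap ω p F x ≤ pLap ω p G x := by
  have hsum : ∀ H : V → ℝ, Summable fun y => ω x y * |H y - H x| ^ (p - 2) * (H y - H x) :=
    fun H => summable_of_hasFiniteSupport
      ((hlf x).subset fun y hy => left_ne_zero_of_mul (left_ne_zero_of_mul hy))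
  refine mul_le_mul_of_nonneg_left ((hsum F).tsum_le_tsum (fun y => ?_) (hsum G))
    (inv_nonneg.2 (tsum_nonneg (hnonneg x)))
  rcases eq_or_ne (ω x y) 0 with h0 | h0
  · simp [h0]
  · simp only [mul_assoc]
    exact mul_le_mul_of_nonneg_left
      (monotone_abs_rpow_mul_self (sub_nonneg.2 hp) (h y h0)) (hnonneg x y)

lemma pLap_le_pLap_of_isMaxOn {V : Type*} (ω : V → V → ℝ) (hsymm : ∀ x y, ω x y = ω y x)
    (hnonneg : ∀ x y, 0 ≤ ω x y) (hlf : ∀ x, (Function.support (ω x)).Finite)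
    {p : ℝ} (hp : 2 ≤ p) {U : Set V} {F G : V → ℝ} {x : V} (hx : x ∈ U)
    (hmax : IsMaxOn (F - G) U x) (hnn : G x ≤ F x) (hbdry : ∀ y ∈ bdry ω U, F y ≤ G y) :
    pLap ω p F x ≤ pLap ω p G x := by
  refine pLap_le_pLap ω hnonneg hlf hp fun y hy => ?_
  suffices (F - G) y ≤ (F - G) x by simp only [Pi.sub_apply] at this; linarith
  by_cases hyU : y ∈ U
  · exact hmax hyU
  · have hyx : 0 < ω y x := hsymm x y ▸ (hnonneg x y).lt_of_ne' hy
    simp only [Pi.sub_apply]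
    linarith [hbdry y ⟨hyU, x, hx, hyx⟩]

lemma HasDerivWithinAt.eventually_lt_add_mul {g : ℝ → ℝ} {d r z : ℝ}
    (hg : HasDerivWithinAt g d (Ioi z) z) (hr : d < r) :
    ∀ᶠ ζ in 𝓝[>] z, g ζ < g z + r * (ζ - z) := by
  filter_upwards [hg.limsup_slope_le' (lt_irrefl z) hr, self_mem_nhdsWithin] with ζ hslope hζ
  rw [slope_def_field, div_lt_iff₀ (sub_pos.2 hζ)] at hslope
  linarith

lemma Finset.eventually_sup'_lt_add_mul {ι : Type*} {s : Finset ι} (hs : s.Nonempty)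
    {g : ι → ℝ → ℝ} {z r : ℝ} (hcont : ∀ i ∈ s, ContinuousWithinAt (g i) (Set.Ioi z) z)
    (hactive : ∀ i ∈ s, g i z = s.sup' hs (g · z) →
      ∀ᶠ ζ in 𝓝[>] z, g i ζ < g i z + r * (ζ - z)) :
    ∀ᶠ ζ in 𝓝[>] z, s.sup' hs (g · ζ) < s.sup' hs (g · z) + r * (ζ - z) := by
  have hall : ∀ i ∈ s, ∀ᶠ ζ in 𝓝[>] z, g i ζ < s.sup' hs (g · z) + r * (ζ - z) := by
    intro i hi
    rcases (Finset.le_sup' (g · z) hi).eq_or_lt with hact | hlt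
    · simpa only [hact] using hactive i hi hact
    · have hlim : Tendsto (fun ζ => g i ζ - r * (ζ - z)) (𝓝[>] z) (𝓝 (g i z - r * (z - z))) :=
        (hcont i hi).tendsto.sub (((continuous_sub_right z).const_mul r).continuousWithinAt.tendsto)
      filter_upwards [hlim.eventually_lt_const (by simpa using hlt)] with ζ hζ
      linarith
  filter_upwards [(eventually_all_finset s).2 hall] with ζ hζ
  exact (Finset.sup'_lt_iff hs).2 hζ

/-- `max (0, max_{i ∈ s} w i)`: the index `none` carries the `0`, so `s` may be empty. -/
noncomputable def posMax {ι : Type*} (s : Finset ι) (w : ι → ℝ) : ℝ :=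
  (Finset.insertNone s).sup' ⟨none, Finset.none_mem_insertNone⟩ fun o => o.elim 0 w

lemma le_posMax {ι : Type*} {s : Finset ι} (w : ι → ℝ) {i : ι} (hi : i ∈ s) :
    w i ≤ posMax s w :=
  Finset.le_sup' (fun o : Option ι => o.elim 0 w) (Finset.some_mem_insertNone.2 hi)

lemma posMax_nonneg {ι : Type*} (s : Finset ι) (w : ι → ℝ) : 0 ≤ posMax s w :=
  Finset.le_sup' (fun o : Option ι => o.elim 0 w) Finset.none_mem_insertNone

lemma posMax_eq_zero {ι : Type*} {s : Finset ι} {w : ι → ℝ} (hw : ∀ i ∈ s, w i ≤ 0) :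
    posMax s w = 0 :=
  (Finset.sup'_le _ _ (Finset.forall_mem_insertNone.2 ⟨le_rfl, hw⟩)).antisymm (posMax_nonneg s w)

lemma continuousOn_posMax {ι : Type*} {s : Finset ι} {w : ι → ℝ → ℝ} {S : Set ℝ}
    (hw : ∀ i ∈ s, ContinuousOn (w i) S) : ContinuousOn (fun z => posMax s (w · z)) S :=
  ContinuousOn.finset_sup'_apply _ (Finset.forall_mem_insertNone.2 ⟨continuousOn_const, hw⟩)

lemma eventually_posMax_lt_add_mul {ι : Type*} {s : Finset ι} {w : ι → ℝ → ℝ} {d : ι → ℝ}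
    {z C r : ℝ} (hw : ∀ i ∈ s, HasDerivWithinAt (w i) (d i) (Ioi z) z)
    (hactive : ∀ i ∈ s, 0 ≤ w i z → (∀ j ∈ s, w j z ≤ w i z) → d i ≤ C * w i z)
    (hr : C * posMax s (w · z) < r) :
    ∀ᶠ ζ in 𝓝[>] z, posMax s (w · ζ) < posMax s (w · z) + r * (ζ - z) := by
  refine Finset.eventually_sup'_lt_add_mul (g := fun o ζ => o.elim 0 (w · ζ)) _
    (Finset.forall_mem_insertNone.2
      ⟨continuousWithinAt_const, fun i hi => (hw i hi).continuousWithinAt⟩)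
    (Finset.forall_mem_insertNone.2 ⟨fun hact => ?_, fun i hi hact => ?_⟩)
  · have hr0 : 0 < r := by simpa [posMax, ← hact] using hr
    filter_upwards [self_mem_nhdsWithin] with ζ hζ
    simpa using mul_pos hr0 (sub_pos.2 hζ)
  · have hact' : w i z = posMax s (w · z) := hact
    have hd := hactive i hi (hact' ▸ posMax_nonneg _ _) fun j hj => hact' ▸ le_posMax (w · z) hj
    exact (hw i hi).eventually_lt_add_mul (hd.trans_lt (hact' ▸ hr))

/-- Unlike `le_gronwallBound_of_liminf_deriv_right_le`, the slope bound is not assumed at the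
left endpoint `a`. -/
lemma le_mul_exp_of_eventually_lt_add_mul {f : ℝ → ℝ} {K a b : ℝ} (hab : a ≤ b)
    (hf : ContinuousOn f (Icc a b))
    (hslope : ∀ x ∈ Ioo a b, ∀ r, K * f x < r → ∀ᶠ z in 𝓝[>] x, f z < f x + r * (z - x)) :
    f b ≤ f a * Real.exp (K * (b - a)) := by
  rcases hab.eq_or_lt with rfl | hab
  · simp
  have hshift : ∀ ε ∈ Ioo a b, f b ≤ f ε * Real.exp (K * (b - ε)) := by
    intro ε hε
    have hslope' : ∀ x ∈ Ico ε b, ∀ r, K * f x < r →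
        ∃ᶠ z in 𝓝[>] x, (z - x)⁻¹ * (f z - f x) < r := by
      intro x hx r hr
      refine Eventually.frequently ?_
      filter_upwards [hslope x ⟨hε.1.trans_le hx.1, hx.2⟩ r hr, self_mem_nhdsWithin] with z hz hxz
      rw [inv_mul_lt_iff₀ (sub_pos.2 hxz)]
      linarith
    simpa [gronwallBound_ε0] using le_gronwallBound_of_liminf_deriv_right_le
      (hf.mono (Icc_subset_Icc_left hε.1.le)) hslope' le_rfl (fun x _ => (add_zero _).ge)
      b ⟨hε.2.le, le_rfl⟩
  have hlim : Tendsto (fun ε => f ε * Real.exp (K * (b - ε))) (𝓝[>] a)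
      (𝓝 (f a * Real.exp (K * (b - a)))) :=
    ((hf a (left_mem_Icc.2 hab.le)).mono_of_mem_nhdsWithin (Icc_mem_nhdsGT hab)).tendsto.mul
      (by fun_prop : Continuous fun ε => Real.exp (K * (b - ε))).continuousWithinAt.tendsto
  exact ge_of_tendsto hlim (eventually_of_mem (Ioo_mem_nhdsGT hab) hshift)

lemma exists_mul_sub_le_of_locallyLipschitz {ι : Type*} {U : Set ι} (hU : U.Finite)
    {I : Set ℝ} (hI : IsCompact I) {σ u v : ι → ℝ → ℝ} {M : ℝ}
    (hσ : ∀ i ∈ U, ∀ z ∈ I, 0 ≤ σ i z ∧ σ i z ≤ M) {f : ℝ → ℝ} (hf : LocallyLipschitz f)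
    (hu : ∀ i ∈ U, ContinuousOn (u i) I) (hv : ∀ i ∈ U, ContinuousOn (v i) I) :
    ∃ C, ∀ i ∈ U, ∀ z ∈ I, u i z ≤ v i z →
      σ i z * (f (v i z) - f (u i z)) ≤ C * (v i z - u i z) := by
  set K := ⋃ i ∈ U, (u i '' I ∪ v i '' I)
  have hK : IsCompact K := hU.isCompact_biUnion fun i hi =>
    (hI.image_of_continuousOn (hu i hi)).union (hI.image_of_continuousOn (hv i hi))
  obtain ⟨L, hL⟩ := (hf.locallyLipschitzOn (s := K)).exists_lipschitzOnWith_of_compact hK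
  refine ⟨M * L, fun i hi z hz huv => ?_⟩
  have hLip : f (v i z) - f (u i z) ≤ L * (v i z - u i z) := by
    have := hL.dist_le_mul (v i z) (mem_biUnion hi (Or.inr (mem_image_of_mem _ hz)))
      (u i z) (mem_biUnion hi (Or.inl (mem_image_of_mem _ hz)))
    rw [Real.dist_eq, Real.dist_eq, abs_of_nonneg (sub_nonneg.2 huv)] at this
    exact (le_abs_self _).trans this
  calc σ i z * (f (v i z) - f (u i z)) ≤ σ i z * (L * (v i z - u i z)) :=
        mul_le_mul_of_nonneg_left hLip (hσ i hi z hz).1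
    _ ≤ M * (L * (v i z - u i z)) :=
        mul_le_mul_of_nonneg_right (hσ i hi z hz).2 (mul_nonneg L.2 (sub_nonneg.2 huv))
    _ = M * L * (v i z - u i z) := (mul_assoc _ _ _).symm

lemma Icc_subset_ITv {T : ℝ≥0∞} {t : ℝ} (ht : t ∈ ITv T) : Icc 0 t ⊆ ITv T :=
  fun _ hz => ⟨hz.1, (ENNReal.ofReal_le_ofReal hz.2).trans_lt ht.2⟩

lemma ITv_mem_nhdsGT {T : ℝ≥0∞} {z : ℝ} (hz : z ∈ ITv T) : ITv T ∈ 𝓝[>] z :=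
  inter_mem (mem_of_superset self_mem_nhdsWithin fun _ hζ => le_of_lt (hz.1.trans_lt hζ))
    (mem_nhdsWithin_of_mem_nhds
      ((isOpen_Iio.preimage ENNReal.continuous_ofReal).mem_nhds hz.2))

lemma ContDiffOn.hasDerivWithinAt_Ioi_of_mem_ITv {T : ℝ≥0∞} {g : ℝ → ℝ}
    (hg : ContDiffOn ℝ 1 g (ITv T)) {z : ℝ} (hz : z ∈ ITv T) :
    HasDerivWithinAt g (derivWithin g (ITv T) z) (Ioi z) z :=
  ((hg.differentiableOn one_ne_zero z hz).hasDerivWithinAt).mono_of_mem_nhdsWithin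
    (ITv_mem_nhdsGT hz)

theorem comparison_principle_general
    {V : Type*} (ω : V → V → ℝ)
    (hsymm : ∀ x y, ω x y = ω y x)
    (hnonneg : ∀ x y, 0 ≤ ω x y)
    (hlf : ∀ x, (Function.support (ω x)).Finite)
    (p : ℝ) (hp : 2 < p)
    (U : Set V) (hUfin : U.Finite)
    (T : ℝ≥0∞)
    (σ : V → ℝ → ℝ)
    (hσpos : ∀ x t, 0 ≤ t → 0 < σ x t)
    (hσbd : ∀ T' : ℝ, 0 ≤ T' → ENNReal.ofReal T' < T →
      ∃ M, ∀ x ∈ vclosure ω U, ∀ t ∈ Set.Icc (0 : ℝ) T', σ x t ≤ M)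
    (f : ℝ → ℝ) (hf : LocallyLipschitz f)
    (u v : V → ℝ → ℝ)
    (hu : ∀ x ∈ U, ContDiffOn ℝ 1 (u x) (ITv T))
    (hv : ∀ x ∈ U, ContDiffOn ℝ 1 (v x) (ITv T))
    (hineq : ∀ x ∈ U, ∀ t ∈ ITv T, 0 < t →
      derivWithin (v x) (ITv T) t - pLap ω p (fun y => v y t) x - σ x t * f (v x t)
        ≤ derivWithin (u x) (ITv T) t - pLap ω p (fun y => u y t) x - σ x t * f (u x t))
    (hbdry : ∀ x ∈ bdry ω U, ∀ t ∈ ITv T, v x t ≤ u x t)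
    (hinit : ∀ x ∈ U, v x 0 ≤ u x 0) :
    ∀ x ∈ vclosure ω U, ∀ t ∈ ITv T, v x t ≤ u x t := by
  rintro x (hxU | hxB) t ht
  swap
  · exact hbdry x hxB t ht
  obtain ⟨s, rfl⟩ := hUfin.exists_finset_coe
  have hIcc := Icc_subset_ITv ht
  obtain ⟨M, hM⟩ := hσbd t ht.1 ht.2
  obtain ⟨C, hC⟩ := exists_mul_sub_le_of_locallyLipschitz hUfin isCompact_Icc
    (fun i hi z hz => ⟨(hσpos i z hz.1).le, hM i (Or.inl hi) z hz⟩) hf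
    (fun i hi => (hu i hi).continuousOn.mono hIcc) (fun i hi => (hv i hi).continuousOn.mono hIcc)
  set m : ℝ → ℝ := fun z => posMax s fun i => v i z - u i z
  have hslope : ∀ z ∈ Ioo 0 t, ∀ r, C * m z < r → ∀ᶠ ζ in 𝓝[>] z, m ζ < m z + r * (ζ - z) := by
    intro z hz r hr
    have hzT := hIcc (Ioo_subset_Icc_self hz)
    refine eventually_posMax_lt_add_mul
      (d := fun i => derivWithin (v i) (ITv T) z - derivWithin (u i) (ITv T) z)
      (fun i hi => ?_) (fun i hi hnn hmax => ?_) hr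
    · exact ((hv i hi).hasDerivWithinAt_Ioi_of_mem_ITv hzT).sub
        ((hu i hi).hasDerivWithinAt_Ioi_of_mem_ITv hzT)
    · have hlap := pLap_le_pLap_of_isMaxOn ω hsymm hnonneg hlf hp.le hi hmax
        (sub_nonneg.1 hnn) fun y hy => hbdry y hy z hzT
      linarith [hineq i hi z hzT hz.1, hC i hi z (Ioo_subset_Icc_self hz) (sub_nonneg.1 hnn)]
  have hgronwall := le_mul_exp_of_eventually_lt_add_mul (f := m) ht.1
    (continuousOn_posMax (w := fun i z => v i z - u i z) fun i hi =>
      ((hv i hi).continuousOn.sub (hu i hi).continuousOn).mono hIcc) hslope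
  have hm0 : m 0 = 0 := posMax_eq_zero fun i hi => sub_nonpos.2 (hinit i hi)
  rw [hm0, zero_mul] at hgronwall
  linarith [le_posMax (fun i => v i t - u i t) hxU]

/-- comparison principle: let `T ∈ (0,∞]`, `p > 2`, `U ⊆ V` finite, and let
`u, v` be `C¹`-in-time functions on `Ū × [0,T)` with
`u_t - Δ_p|_U u - σ f(u) ≥ v_t - Δ_p|_U v - σ f(v)` in `U × (0,T)`, `u ≥ v` on
`∂U × [0,T)`, and `u(·,0) ≥ v(·,0)` on `U`. Then `u ≥ v` on `Ū × [0,T)`. -/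
theorem comparison_principle
    {V : Type*} (ω : V → V → ℝ)
    (hsymm : ∀ x y, ω x y = ω y x)
    (hnonneg : ∀ x y, 0 ≤ ω x y)
    (hloop : ∀ x, ω x x = 0)
    (hlf : ∀ x, (Function.support (ω x)).Finite)
    (hconn : ∀ x y, Relation.ReflTransGen (fun a b => 0 < ω a b) x y)
    (p : ℝ) (hp : 2 < p)
    (U : Set V) (hUfin : U.Finite)
    (T : ℝ≥0∞) (hT : 0 < T)
    (σ : V → ℝ → ℝ)
    (hσpos : ∀ x t, 0 ≤ t → 0 < σ x t)
    (hσcont : ∀ x, ContinuousOn (σ x) (Set.Ici 0))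
    (hσbd : ∀ T' : ℝ, 0 ≤ T' → ENNReal.ofReal T' < T →
      ∃ M, ∀ x ∈ vclosure ω U, ∀ t ∈ Set.Icc (0 : ℝ) T', σ x t ≤ M)
    (f : ℝ → ℝ) (hf : LocallyLipschitz f)
    (u v : V → ℝ → ℝ)
    (hu : ∀ x ∈ U, ContDiffOn ℝ 1 (u x) (ITv T))
    (hv : ∀ x ∈ U, ContDiffOn ℝ 1 (v x) (ITv T))
    (hineq : ∀ x ∈ U, ∀ t ∈ ITv T, 0 < t →
      derivWithin (v x) (ITv T) t - pLap ω p (fun y => v y t) x - σ x t * f (v x t)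
        ≤ derivWithin (u x) (ITv T) t - pLap ω p (fun y => u y t) x - σ x t * f (u x t))
    (hbdry : ∀ x ∈ bdry ω U, ∀ t ∈ ITv T, v x t ≤ u x t)
    (hinit : ∀ x ∈ U, v x 0 ≤ u x 0) :
    ∀ x ∈ vclosure ω U, ∀ t ∈ ITv T, v x t ≤ u x t :=
  comparison_principle_general ω hsymm hnonneg hlf p hp U hUfin T σ hσpos hσbd f hf u v hu hv hineq
    hbdry hinit
end

section
/- Let p>2 and U⊆V be finite and nonempty. Suppose δ>0 with σ(x,t) ≥ δ for all x∈U, t ≥ 0, and f(s) ≥ (1/δ)·s^{p−1} for all s ≥ 0. Let u:Ū×[0,T)→ℝ be a nonnegative solution (with u(x,·)∈C¹ for x∈U) of u_t = Δ_p|_U u + σ(x,t)f(u) in U×(0,T), u=0 on ∂U×[0,T). Then the function t ↦ max_{x∈U} u(x,t) is nondecreasing on [0,T). -/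
/-!
At a vertex `x` where `u(·, t)` attains its maximum `m ≥ 0` over `U`, every neighbour value
lies in `[0, m]` (it vanishes on `∂U`), so each term of `Δ_p u(x, t)` is at least `-m^{p-1}`,
and so is their weighted average; the reaction term is at least `δ · (1/δ) m^{p-1} = m^{p-1}`.
Hence a maximizing component has nonnegative derivative. The maximum of finitely many `C¹`
functions is then touched from below, at every time, by a function with nonnegative right
derivative, and a Dini-derivative argument makes it nondecreasing.
-/

open scoped ENNReal
open Classical Filter Set

open Topology

lemma neg_rpow_sub_one_le_abs_rpow_sub_two_mul {m d p : ℝ} (hp : 1 ≤ p) (hd : d ≤ 0)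
    (hmd : -m ≤ d) : -(m ^ (p - 1)) ≤ |d| ^ (p - 2) * d := by
  rcases hd.lt_or_eq with hneg | rfl
  · have hpow : |d| ^ (p - 1) = |d| ^ (p - 2) * |d| := by
      rw [← Real.rpow_add_one (abs_pos.2 hneg.ne).ne']
      ring_nf
    have hle : |d| ^ (p - 1) ≤ m ^ (p - 1) :=
      Real.rpow_le_rpow (abs_nonneg d) (by rw [abs_of_neg hneg]; linarith) (by linarith)
    have heq : |d| ^ (p - 2) * d = -(|d| ^ (p - 1)) := by
      rw [hpow, abs_of_neg hneg]
      ring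
    linarith
  · rw [mul_zero, neg_nonpos]
    exact Real.rpow_nonneg (by linarith) _

section pLap

variable {V : Type*} {ω : V → V → ℝ} {p : ℝ}

lemma le_pLap_of_forall_adj {g : V → ℝ} {x : V} {c : ℝ} (hnonneg : ∀ y, 0 ≤ ω x y)
    (hlf : (Function.support (ω x)).Finite) (hc : c ≤ 0)
    (h : ∀ y, 0 < ω x y → c ≤ |g y - g x| ^ (p - 2) * (g y - g x)) :
    c ≤ pLap ω p g x := by
  have hsummable (φ : V → ℝ) : Summable fun y => ω x y * φ y :=
    summable_of_hasFiniteSupport (hlf.subset (Function.support_mul_subset_left _ _))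
  have hsum : c * graphMu ω x ≤ ∑' y, ω x y * |g y - g x| ^ (p - 2) * (g y - g x) := by
    rw [graphMu, ← tsum_mul_left]
    refine Summable.tsum_le_tsum (fun y => ?_) ((hsummable _).congr fun y => mul_comm _ _)
      ((hsummable _).congr fun y => (mul_assoc _ _ _).symm)
    rcases (hnonneg y).eq_or_lt with h0 | hpos
    · simp [← h0]
    · rw [mul_comm c, mul_assoc]
      exact mul_le_mul_of_nonneg_left (h y hpos) hpos.le
  have hμ : 0 ≤ graphMu ω x := tsum_nonneg hnonneg
  unfold pLap
  rcases hμ.eq_or_lt with hμ | hμ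
  · simpa [← hμ] using hc
  · rw [le_inv_mul_iff₀ hμ, mul_comm]
    exact hsum

lemma neg_rpow_le_pLap_of_isMaxOn {U : Set V} {g : V → ℝ} {x : V}
    (hsymm : ∀ x y, ω x y = ω y x) (hnonneg : ∀ x y, 0 ≤ ω x y)
    (hlf : (Function.support (ω x)).Finite) (hp : 1 ≤ p) (hx : x ∈ U) (hmax : IsMaxOn g U x)
    (hnn : ∀ y ∈ U, 0 ≤ g y) (hbdry : ∀ y ∈ bdry ω U, g y = 0) :
    -(g x ^ (p - 1)) ≤ pLap ω p g x := by
  refine le_pLap_of_forall_adj (hnonneg x) hlf (neg_nonpos.2 (Real.rpow_nonneg (hnn x hx) _))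
    fun y hy => neg_rpow_sub_one_le_abs_rpow_sub_two_mul hp ?_ ?_
  all_goals
    by_cases hyU : y ∈ U
    · linarith [hnn y hyU, isMaxOn_iff.1 hmax y hyU]
    · have : g y = 0 := hbdry y ⟨hyU, x, hx, by rwa [hsymm]⟩
      linarith [hnn x hx]

end pLap

section Calculus

variable {f : ℝ → ℝ} {a b : ℝ}

theorem monotoneOn_Ioo_of_right_minorant (hf : ContinuousOn f (Ioo a b))
    (h : ∀ x ∈ Ioo a b, ∃ g : ℝ → ℝ, ∃ g' ≥ 0, HasDerivWithinAt g g' (Ioi x) x ∧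
      g x = f x ∧ ∀ᶠ z in 𝓝[>] x, g z ≤ f z) :
    MonotoneOn f (Ioo a b) := by
  intro x hx y hy hxy
  have hsub : Icc x y ⊆ Ioo a b := Icc_subset_Ioo hx.1 hy.2
  have bound : ∀ t ∈ Ico x y, ∀ r, (0 : ℝ) < r →
      ∃ᶠ z in 𝓝[>] t, slope (-f) t z < r := by
    intro t ht r hr
    obtain ⟨g, g', hg', hg, hgt, hgf⟩ := h t (hsub (Ico_subset_Icc_self ht))
    have hslope : ∀ᶠ z in 𝓝[>] t, -r < slope g t z :=
      ((hasDerivWithinAt_iff_tendsto_slope' (lt_irrefl t)).1 hg).eventually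
        (eventually_gt_nhds (by linarith))
    refine Eventually.frequently ?_
    filter_upwards [hslope, hgf, self_mem_nhdsWithin] with z hz hgz (htz : t < z)
    have : slope g t z ≤ slope f t z := by
      simp only [slope_def_field]
      exact div_le_div_of_nonneg_right (by linarith) (by linarith)
    rw [slope_neg_fun, Pi.neg_apply, Pi.neg_apply]
    linarith
  simpa using image_le_of_liminf_slope_right_le_deriv_boundary (B := fun _ => -f x)
    (hf.mono hsub).neg le_rfl continuousOn_const (fun t _ => hasDerivWithinAt_const t _ _) bound
    (right_mem_Icc.2 hxy)

theorem MonotoneOn.Ico_of_Ioo (hf : MonotoneOn f (Ioo a b))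
    (hcont : ContinuousOn f (Ico a b)) : MonotoneOn f (Ico a b) := by
  intro x hx y hy hxy
  rcases hx.1.eq_or_lt with rfl | hax
  · rcases hxy.eq_or_lt with rfl | hay
    · exact le_rfl
    have hclos : a ∈ closure (Ioo a y) := by
      rw [closure_Ioo hay.ne]
      exact left_mem_Icc.2 hay.le
    have hcont' := (hcont a hx).mono (Ioo_subset_Ico_self.trans (Ico_subset_Ico_right hy.2.le))
    exact hcont'.closure_le hclos continuousWithinAt_const
      fun z hz => hf ⟨hz.1, hz.2.trans hy.2⟩ ⟨hay, hy.2⟩ hz.2.le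
  · exact hf ⟨hax, hx.2⟩ ⟨hax.trans_le hxy, hy.2⟩ hxy

theorem ContinuousOn.ciSup_apply {α ι : Type*} [TopologicalSpace α] [Finite ι] [Nonempty ι]
    {u : ι → α → ℝ} {s : Set α} (hu : ∀ i, ContinuousOn (u i) s) :
    ContinuousOn (fun t => ⨆ i, u i t) s := by
  have := Fintype.ofFinite ι
  simp_rw [← Finset.sup'_univ_eq_ciSup]
  exact ContinuousOn.finset_sup'_apply Finset.univ_nonempty fun i _ => hu i

theorem monotoneOn_ciSup_of_derivWithin_nonneg {ι : Type*} [Finite ι] [Nonempty ι]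
    {u : ι → ℝ → ℝ} (hu : ∀ i, DifferentiableOn ℝ (u i) (Ico a b))
    (h : ∀ t ∈ Ioo a b, ∀ i, u i t = ⨆ j, u j t → 0 ≤ derivWithin (u i) (Ico a b) t) :
    MonotoneOn (fun t => ⨆ i, u i t) (Ico a b) := by
  have hcont : ContinuousOn (fun t => ⨆ i, u i t) (Ico a b) :=
    ContinuousOn.ciSup_apply fun i => (hu i).continuousOn
  refine MonotoneOn.Ico_of_Ioo (monotoneOn_Ioo_of_right_minorant (hcont.mono Ioo_subset_Ico_self)
    fun t ht => ?_) hcont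
  obtain ⟨i, hi⟩ := exists_eq_ciSup_of_finite (f := fun i => u i t)
  refine ⟨u i, _, h t ht i hi, ?_, hi, Eventually.of_forall fun z => ?_⟩
  · exact ((hu i t (Ioo_subset_Ico_self ht)).hasDerivWithinAt.hasDerivAt
      (Ico_mem_nhds ht.1 ht.2)).hasDerivWithinAt
  · exact le_ciSup (Finite.bddAbove_range fun j => u j z) i

end Calculus

theorem max_of_solution_monotone_general
    {V : Type*} (ω : V → V → ℝ)
    (hsymm : ∀ x y, ω x y = ω y x)
    (hnonneg : ∀ x y, 0 ≤ ω x y)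
    (hlf : ∀ x, (Function.support (ω x)).Finite)
    (p : ℝ) (hp : 2 < p)
    (U : Set V) (hUfin : U.Finite) (hUne : U.Nonempty)
    (σ : V → ℝ → ℝ)
    (δ : ℝ) (hδpos : 0 < δ) (hσδ : ∀ x ∈ U, ∀ t, 0 ≤ t → δ ≤ σ x t)
    (f : ℝ → ℝ)
    (hfgrow : ∀ s, 0 ≤ s → (1 / δ) * s ^ (p - 1) ≤ f s)
    (T : ℝ) (u : V → ℝ → ℝ)
    (hreg : ∀ x ∈ U, ContDiffOn ℝ 1 (u x) (Set.Ico 0 T))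
    (hnn : ∀ x ∈ vclosure ω U, ∀ t ∈ Set.Ico (0 : ℝ) T, 0 ≤ u x t)
    (heq : ∀ x ∈ U, ∀ t ∈ Set.Ioo (0 : ℝ) T,
      derivWithin (u x) (Set.Ico 0 T) t = pLap ω p (fun y => u y t) x + σ x t * f (u x t))
    (hbdry : ∀ x ∈ bdry ω U, ∀ t ∈ Set.Ico (0 : ℝ) T, u x t = 0) :
    MonotoneOn (fun t => ⨆ x : U, u x.1 t) (Set.Ico 0 T) := by
  have := hUfin.to_subtype
  have := hUne.to_subtype
  refine monotoneOn_ciSup_of_derivWithin_nonneg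
    (fun x => (hreg x x.2).differentiableOn one_ne_zero) ?_
  rintro t ht ⟨x, hx⟩ hmax
  have htIco : t ∈ Ico 0 T := Ioo_subset_Ico_self ht
  have hux : 0 ≤ u x t := hnn x (Or.inl hx) t htIco
  have hdiffusion : -(u x t ^ (p - 1)) ≤ pLap ω p (fun y => u y t) x :=
    neg_rpow_le_pLap_of_isMaxOn hsymm hnonneg (hlf x) (by linarith) hx
      (isMaxOn_iff.2 fun y hy =>
        hmax ▸ le_ciSup (Finite.bddAbove_range fun j : U => u j t) ⟨y, hy⟩)
      (fun y hy => hnn y (Or.inl hy) t htIco) (fun y hy => hbdry y hy t htIco)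
  have hreaction : u x t ^ (p - 1) ≤ σ x t * f (u x t) := calc
    u x t ^ (p - 1) = δ * ((1 / δ) * u x t ^ (p - 1)) := by field_simp
    _ ≤ σ x t * f (u x t) := mul_le_mul (hσδ x hx t ht.1.le) (hfgrow _ hux)
      (by positivity) (by linarith [hσδ x hx t ht.1.le])
  rw [heq x hx t ht]
  linarith

/-- if `σ ≥ δ > 0` on `U × [0,∞)` and `f(s) ≥ (1/δ) s^{p-1}` for `s ≥ 0`, then
for any nonnegative solution `u` of the Dirichlet problem `u_t = Δ_p|_U u + σ f(u)` in
`U × (0,T)` with `u = 0` on `∂U × [0,T)`, the function `t ↦ max_{x ∈ U} u(x,t)` is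
nondecreasing on `[0,T)`. -/
theorem max_of_solution_monotone
    {V : Type*} (ω : V → V → ℝ)
    (hsymm : ∀ x y, ω x y = ω y x)
    (hnonneg : ∀ x y, 0 ≤ ω x y)
    (hloop : ∀ x, ω x x = 0)
    (hlf : ∀ x, (Function.support (ω x)).Finite)
    (hconn : ∀ x y, Relation.ReflTransGen (fun a b => 0 < ω a b) x y)
    (p : ℝ) (hp : 2 < p)
    (U : Set V) (hUfin : U.Finite) (hUne : U.Nonempty)
    (σ : V → ℝ → ℝ)
    (hσpos : ∀ x t, 0 ≤ t → 0 < σ x t)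
    (hσcont : ∀ x, ContinuousOn (σ x) (Set.Ici 0))
    (δ : ℝ) (hδpos : 0 < δ) (hσδ : ∀ x ∈ U, ∀ t, 0 ≤ t → δ ≤ σ x t)
    (f : ℝ → ℝ) (hf : LocallyLipschitz f) (hf0 : f 0 = 0)
    (hfgrow : ∀ s, 0 ≤ s → (1 / δ) * s ^ (p - 1) ≤ f s)
    (T : ℝ) (hT : 0 < T) (u : V → ℝ → ℝ)
    (hreg : ∀ x ∈ U, ContDiffOn ℝ 1 (u x) (Set.Ico 0 T))
    (hnn : ∀ x ∈ vclosure ω U, ∀ t ∈ Set.Ico (0 : ℝ) T, 0 ≤ u x t)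
    (heq : ∀ x ∈ U, ∀ t ∈ Set.Ioo (0 : ℝ) T,
      derivWithin (u x) (Set.Ico 0 T) t = pLap ω p (fun y => u y t) x + σ x t * f (u x t))
    (hbdry : ∀ x ∈ bdry ω U, ∀ t ∈ Set.Ico (0 : ℝ) T, u x t = 0) :
    MonotoneOn (fun t => ⨆ x : U, u x.1 t) (Set.Ico 0 T) :=
  max_of_solution_monotone_general ω hsymm hnonneg hlf p hp U hUfin hUne σ δ hδpos hσδ f hfgrow T u
    hreg hnn heq hbdry
end
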